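/- arXiv:2104.03454 — 4 statements merged into one kernel-verified Lean document; each statement's English description precedes it below -/
import Mathlib

section
/- Let G=(V,E) be a finite directed graph with incidence matrix A ∈ {-1,0,1}^{n×r} (column k has -1 at the source of edge k, +1 at the target, 0 elsewhere; for self-loops the column is zero). If G is weakly reversible (every edge lies on a directed cycle), then there exists a matrix B ∈ ℝ^{n×r} structurally equivalent to A (i.e., for all i,j: A_{i,j} < 0 ⟺ B_{i,j} < 0, A_{i,j} = 0 ⟺ B_{i,j} = 0, and A_{i,j} > 0 ⟺ B_{i,j} > 0) such that B·𝟙 = 0, where 𝟙 = (1,…,1) ∈ ℝ^r. -/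
/-!
Weak reversibility gives, for every edge `e`, a path from `tgt e` back to `src e`; the indicator
of `e` plus the edge-counts of that path is a nonnegative circulation (a flow of zero divergence,
i.e. a vector in the kernel of `A`) that is positive on `e`. Summing these over all edges yields a
strictly positive `w` with `A w = 0`, and `B = A · diag w` rescales the columns of `A` by positive
numbers, so it has the sign pattern of `A` and `B 𝟙 = A w = 0`.
-/

open Matrix

lemma signs_mul_diagonal_of_pos {V E R : Type*} [Fintype E] [DecidableEq E] [Ring R]
    [LinearOrder R] [IsStrictOrderedRing R] (A : Matrix V E R) {w : E → R} (hw : ∀ k, 0 < w k)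
    (i : V) (k : E) :
    (A i k < 0 ↔ (A * diagonal w) i k < 0) ∧ (A i k = 0 ↔ (A * diagonal w) i k = 0) ∧
      (0 < A i k ↔ 0 < (A * diagonal w) i k) := by
  simp only [mul_diagonal]
  refine ⟨?_, by simp [(hw k).ne'], (mul_pos_iff_of_pos_right (hw k)).symm⟩
  simpa using (mul_lt_mul_iff_of_pos_right (b := A i k) (c := 0) (hw k)).symm

section Incidence

variable {V E : Type*} (R : Type*) [DecidableEq V] [Ring R] (src tgt : E → V)

def incidenceMatrix : Matrix V E R :=
  of fun j k => (if tgt k = j then 1 else 0) - (if src k = j then 1 else 0)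

variable {R}

lemma incidenceMatrix_col (k : E) :
    (incidenceMatrix R src tgt).col k = Pi.single (tgt k) 1 - Pi.single (src k) 1 := by
  ext j
  simp [incidenceMatrix, Pi.single_apply, eq_comm]

variable [Fintype E] [PartialOrder R]

lemma exists_nonneg_flow_of_reflTransGen [IsOrderedRing R] {a b : V}
    (h : Relation.ReflTransGen (fun a b => ∃ e, src e = a ∧ tgt e = b) a b) :
    ∃ f : E → R, 0 ≤ f ∧
      incidenceMatrix R src tgt *ᵥ f = Pi.single b 1 - Pi.single a 1 := by
  classical
  induction h with
  | refl => exact ⟨0, le_rfl, by simp⟩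
  | tail _ hbc ih =>
    obtain ⟨f, hf, hdiv⟩ := ih
    obtain ⟨e, rfl, rfl⟩ := hbc
    refine ⟨f + Pi.single e 1, add_nonneg hf (Pi.single_nonneg.2 zero_le_one), ?_⟩
    rw [mulVec_add, hdiv, mulVec_single_one, incidenceMatrix_col]
    abel

lemma exists_pos_mulVec_incidenceMatrix_eq_zero [IsStrictOrderedRing R]
    (hwr : ∀ e, Relation.ReflTransGen (fun a b => ∃ e', src e' = a ∧ tgt e' = b)
      (tgt e) (src e)) :
    ∃ w : E → R, (∀ k, 0 < w k) ∧ incidenceMatrix R src tgt *ᵥ w = 0 := by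
  classical
  choose f hf hdiv using fun e => exists_nonneg_flow_of_reflTransGen (R := R) src tgt (hwr e)
  have hterm : ∀ e, 0 ≤ Pi.single e 1 + f e :=
    fun e => add_nonneg (Pi.single_nonneg.2 zero_le_one) (hf e)
  refine ⟨∑ e, (Pi.single e 1 + f e), fun k => ?_, ?_⟩
  · calc (0 : R) < 1 + f k k := add_pos_of_pos_of_nonneg one_pos (hf k k)
      _ = (Pi.single k 1 + f k : E → R) k := by simp
      _ ≤ (∑ e, (Pi.single e 1 + f e) : E → R) k :=
        Finset.single_le_sum (fun e _ => hterm e) (Finset.mem_univ k) k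
  · simp_rw [mulVec_sum, mulVec_add, mulVec_single_one, incidenceMatrix_col, hdiv]
    simp

end Incidence

theorem stmt_0_general {V E : Type*} [Fintype E] [DecidableEq V]
    (src tgt : E → V) (A : Matrix V E ℝ)
    (hA : ∀ j k, A j k = (if tgt k = j then (1 : ℝ) else 0) -
      (if src k = j then (1 : ℝ) else 0))
    (hwr : ∀ e : E, Relation.ReflTransGen
      (fun a b => ∃ e', src e' = a ∧ tgt e' = b) (tgt e) (src e)) :
    ∃ B : Matrix V E ℝ,
      (∀ i j, (A i j < 0 ↔ B i j < 0) ∧ (A i j = 0 ↔ B i j = 0) ∧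
        (0 < A i j ↔ 0 < B i j)) ∧
      B.mulVec (fun _ => (1 : ℝ)) = 0 := by
  classical
  obtain rfl : A = incidenceMatrix ℝ src tgt := Matrix.ext hA
  obtain ⟨w, hw, hcirc⟩ := exists_pos_mulVec_incidenceMatrix_eq_zero (R := ℝ) src tgt hwr
  refine ⟨_ * diagonal w, signs_mul_diagonal_of_pos _ hw, ?_⟩
  have hw1 : diagonal w *ᵥ (fun _ => (1 : ℝ)) = w := by ext; simp [mulVec_diagonal]
  rw [← mulVec_mulVec, hw1, hcirc]

/-- If every edge of a finite directed multigraph lies on a directed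
cycle (weak reversibility), then there is a matrix `B` structurally equivalent to
the incidence matrix `A` with `B · 𝟙 = 0`. -/
theorem stmt_0 {V E : Type*} [Fintype V] [Fintype E] [DecidableEq V]
    (src tgt : E → V) (A : Matrix V E ℝ)
    (hA : ∀ j k, A j k = (if tgt k = j then (1 : ℝ) else 0) -
      (if src k = j then (1 : ℝ) else 0))
    (hwr : ∀ e : E, Relation.ReflTransGen
      (fun a b => ∃ e', src e' = a ∧ tgt e' = b) (tgt e) (src e)) :
    ∃ B : Matrix V E ℝ,
      (∀ i j, (A i j < 0 ↔ B i j < 0) ∧ (A i j = 0 ↔ B i j = 0) ∧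
        (0 < A i j ↔ 0 < B i j)) ∧
      B.mulVec (fun _ => (1 : ℝ)) = 0 :=
  stmt_0_general src tgt A hA hwr
end

section
/- If a directed graph G is weakly reversible (every edge lies on a directed cycle), then there exists a vector v ∈ ℝ^r with all entries strictly positive such that A·v = 0, where A is the incidence matrix of G. -/
/-!
Every edge `e` closes a directed cycle with a path from `tgt e` back to `src e`. Counting how often
each edge is used along that cycle gives a nonnegative vector in the kernel of the incidence matrix
that is positive at `e`; the sum of these cycle vectors over all edges is positive everywhere.
-/

open Matrix

namespace DirectedMultigraph

variable {V E R : Type*} [Fintype E] [DecidableEq V] [Ring R]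

def incidenceMatrix (src tgt : E → V) : Matrix V E R :=
  Matrix.of fun j k => (Pi.single (tgt k) 1 - Pi.single (src k) 1 : V → R) j

theorem incidenceMatrix_mulVec_single_one [DecidableEq E] (src tgt : E → V) (e : E) :
    incidenceMatrix src tgt *ᵥ Pi.single e (1 : R) = Pi.single (tgt e) 1 - Pi.single (src e) 1 :=
  mulVec_single_one _ e

variable [PartialOrder R] [IsOrderedRing R]

/-- The edge-count vector of a walk from `a` to `b`. -/
theorem exists_nonneg_mulVec_eq_of_reflTransGen (src tgt : E → V) {a b : V}
    (hab : Relation.ReflTransGen (fun a b => ∃ e, src e = a ∧ tgt e = b) a b) :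
    ∃ w : E → R, 0 ≤ w ∧ incidenceMatrix src tgt *ᵥ w = Pi.single b 1 - Pi.single a 1 := by
  classical
  induction hab with
  | refl => exact ⟨0, le_rfl, by simp⟩
  | tail _ hbc ih =>
    obtain ⟨w, hw, hAw⟩ := ih
    obtain ⟨e, rfl, rfl⟩ := hbc
    refine ⟨w + Pi.single e 1, add_nonneg hw (Pi.single_nonneg.2 zero_le_one), ?_⟩
    rw [mulVec_add, hAw, incidenceMatrix_mulVec_single_one]
    abel

theorem exists_nonneg_mulVec_eq_zero_of_reflTransGen [Nontrivial R] (src tgt : E → V) (e : E)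
    (he : Relation.ReflTransGen (fun a b => ∃ e', src e' = a ∧ tgt e' = b) (tgt e) (src e)) :
    ∃ c : E → R, 0 ≤ c ∧ 0 < c e ∧ incidenceMatrix src tgt *ᵥ c = 0 := by
  classical
  obtain ⟨w, hw, hAw⟩ := exists_nonneg_mulVec_eq_of_reflTransGen (R := R) src tgt he
  refine ⟨w + Pi.single e 1, add_nonneg hw (Pi.single_nonneg.2 zero_le_one), ?_, ?_⟩
  · simpa using add_pos_of_nonneg_of_pos (hw e) zero_lt_one
  · rw [mulVec_add, hAw, incidenceMatrix_mulVec_single_one]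
    abel

end DirectedMultigraph

theorem Matrix.exists_pos_mulVec_eq_zero_of_forall_exists {m n R : Type*} [Fintype n]
    [Ring R] [PartialOrder R] [IsOrderedRing R] (M : Matrix m n R)
    (h : ∀ k, ∃ c : n → R, 0 ≤ c ∧ 0 < c k ∧ M *ᵥ c = 0) :
    ∃ v : n → R, (∀ k, 0 < v k) ∧ M *ᵥ v = 0 := by
  choose c hc_nonneg hc_pos hc_ker using h
  refine ⟨∑ k, c k, fun k => ?_, by simp [mulVec_sum, hc_ker]⟩
  rw [Finset.sum_apply]
  exact (hc_pos k).trans_le <|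
    Finset.single_le_sum (fun i _ => hc_nonneg i k) (Finset.mem_univ k)

theorem stmt_2_general {V E : Type*} [Fintype E] [DecidableEq V]
    (src tgt : E → V) (A : Matrix V E ℝ)
    (hA : ∀ j k, A j k = (if tgt k = j then (1 : ℝ) else 0) -
      (if src k = j then (1 : ℝ) else 0))
    (hwr : ∀ e : E, Relation.ReflTransGen
      (fun a b => ∃ e', src e' = a ∧ tgt e' = b) (tgt e) (src e)) :
    ∃ v : E → ℝ, (∀ k, 0 < v k) ∧ A.mulVec v = 0 := by
  have hA_eq : A = DirectedMultigraph.incidenceMatrix src tgt := by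
    ext j k
    simp [hA, DirectedMultigraph.incidenceMatrix, Pi.single_apply, eq_comm]
  subst hA_eq
  exact (DirectedMultigraph.incidenceMatrix src tgt).exists_pos_mulVec_eq_zero_of_forall_exists
    fun e => DirectedMultigraph.exists_nonneg_mulVec_eq_zero_of_reflTransGen src tgt e (hwr e)

/-- If every edge lies on a directed cycle, then there is a strictly
positive vector in the kernel of the incidence matrix. -/
theorem stmt_2 {V E : Type*} [Fintype V] [Fintype E] [DecidableEq V]
    (src tgt : E → V) (A : Matrix V E ℝ)
    (hA : ∀ j k, A j k = (if tgt k = j then (1 : ℝ) else 0) -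
      (if src k = j then (1 : ℝ) else 0))
    (hwr : ∀ e : E, Relation.ReflTransGen
      (fun a b => ∃ e', src e' = a ∧ tgt e' = b) (tgt e) (src e)) :
    ∃ v : E → ℝ, (∀ k, 0 < v k) ∧ A.mulVec v = 0 :=
  stmt_2_general src tgt A hA hwr
end

section
/- Let (G,y) be a chemical reaction network with reaction graph G=(V,E,ρ,π) and stoichiometric map y: V → ℝ^m, and let (G̃,ỹ,ỹ') be a split network translation of (G,y) with slices indexed by l ∈ {1,…,q}, bijections α^{(l)}: E → Ẽ^{(l)}, and uniform source map β: E → Ṽ. Then for any rate constants κ ∈ ℝ_{>0}^{|E|} (assigning the rate constant of reaction k to each of its copies α^{(l)}(k)), the mass-action vector field of (G,y), namely x ↦ Σ_{k∈E} κ_k (y(π(k)) − y(ρ(k))) x^{y(ρ(k))}, equals the generalized mass-action vector field of (G̃,ỹ,ỹ'), namely x ↦ Σ_{k∈E} Σ_{l∈Q} κ_k (ỹ(π̃^{(l)}(α^{(l)}(k))) − ỹ(β(k))) x^{ỹ'(β(k))}, for all x ∈ ℝ_{>0}^m. -/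
open Finset

theorem stmt_3_general {V E Vt : Type*} [Fintype E] {m q : ℕ} {Et : Fin q → Type*}
    (ρ π : E → V) (y : V → Fin m → ℝ)
    (πt : ∀ l : Fin q, Et l → Vt) (yt yt' : Vt → Fin m → ℝ)
    (α : ∀ l : Fin q, E ≃ Et l) (β : E → Vt)
    -- (c) kinetic-order complexes are the original sources
    (hc : ∀ k : E, yt' (β k) = y (ρ k))
    -- (d) summed reaction vectors across slices equal the original ones
    (hd : ∀ k : E, ∑ l : Fin q, (yt (πt l (α l k)) - yt (β k)) = y (π k) - y (ρ k))
    (κ : E → ℝ) :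
    ∀ x : Fin m → ℝ, (∀ j, 0 < x j) →
      ∑ k : E, (κ k * ∏ j : Fin m, x j ^ (y (ρ k) j)) • (y (π k) - y (ρ k)) =
      ∑ k : E, ∑ l : Fin q,
        (κ k * ∏ j : Fin m, x j ^ (yt' (β k) j)) • (yt (πt l (α l k)) - yt (β k)) := by
  intro x _
  refine Finset.sum_congr rfl fun k _ => ?_
  rw [← Finset.smul_sum, hd k, hc k]

/-- Dynamical equivalence of a mass-action system and the
generalized mass-action system of a split network translation. -/
theorem stmt_3 {V E Vt : Type*} [Fintype E] {m q : ℕ} {Et : Fin q → Type*}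
    (ρ π : E → V) (y : V → Fin m → ℝ)
    (ρt πt : ∀ l : Fin q, Et l → Vt) (yt yt' : Vt → Fin m → ℝ)
    (α : ∀ l : Fin q, E ≃ Et l) (β : E → Vt)
    -- (a) uniform source map across slices
    (ha : ∀ (l : Fin q) (k : E), ρt l (α l k) = β k)
    -- (b) common sources are preserved
    (hb : ∀ k' k'' : E, ρ k' = ρ k'' → β k' = β k'')
    -- (c) kinetic-order complexes are the original sources
    (hc : ∀ k : E, yt' (β k) = y (ρ k))
    -- (d) summed reaction vectors across slices equal the original ones
    (hd : ∀ k : E, ∑ l : Fin q, (yt (πt l (α l k)) - yt (β k)) = y (π k) - y (ρ k))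
    (κ : E → ℝ) (hκ : ∀ k, 0 < κ k) :
    ∀ x : Fin m → ℝ, (∀ j, 0 < x j) →
      ∑ k : E, (κ k * ∏ j : Fin m, x j ^ (y (ρ k) j)) • (y (π k) - y (ρ k)) =
      ∑ k : E, ∑ l : Fin q,
        (κ k * ∏ j : Fin m, x j ^ (yt' (β k) j)) • (yt (πt l (α l k)) - yt (β k)) :=
  stmt_3_general ρ π y πt yt yt' α β hc hd κ
end

section
/- For the PFK-2/FBPase-2 mass-action system (six species, nine reactions with rate constants k₁,…,k₉ > 0 as specified), for every pair τ₁, τ₂ > 0 the point x₁ = (k₂(k₅+k₉) + k₄k₉τ₂)τ₁/(k₁(k₅+k₉)), x₂ = τ₁, x₃ = (k₂(k₅+k₉) + k₄k₈τ₂)τ₁/(k₃(k₅+k₉)), x₄ = τ₂, x₅ = k₁k₄(k₇+k₈)τ₂/(k₆(k₂(k₅+k₉) + k₄k₉τ₂)), x₆ = k₄τ₁τ₂/(k₅+k₉) is a positive steady state of the system. -/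
/- The steady-state equations are linearly dependent: the sixth is minus the sum of the fourth and
fifth, and the first is minus the sum of the second, third and sixth. With `x₂ = τ₁` and `x₄ = τ₂`
free, the four remaining ones determine `x₆`, then `x₁` and `x₃`, then `x₅`, one at a time. -/

/-- Steady state condition for the PFK-2/FBPase-2 mass-action system. -/
def pfkSteady (k1 k2 k3 k4 k5 k6 k7 k8 k9 x1 x2 x3 x4 x5 x6 : ℝ) : Prop :=
  -k1 * x1 + k3 * x3 - k6 * x1 * x5 + (k7 + k9) * x6 = 0 ∧
  k1 * x1 - k2 * x2 - k4 * x2 * x4 + k5 * x6 = 0 ∧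
  k2 * x2 - k3 * x3 + k8 * x6 = 0 ∧
  -k4 * x2 * x4 + (k5 + k9) * x6 = 0 ∧
  -k6 * x1 * x5 + (k7 + k8) * x6 = 0 ∧
  k4 * x2 * x4 + k6 * x1 * x5 - (k5 + k7 + k8 + k9) * x6 = 0

theorem pfkSteady_iff {k1 k2 k3 k4 k5 k6 k7 k8 k9 x1 x2 x3 x4 x5 x6 : ℝ} :
    pfkSteady k1 k2 k3 k4 k5 k6 k7 k8 k9 x1 x2 x3 x4 x5 x6 ↔
      (k5 + k9) * x6 = k4 * x2 * x4 ∧ k1 * x1 = k2 * x2 + k9 * x6 ∧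
        k3 * x3 = k2 * x2 + k8 * x6 ∧ k6 * x1 * x5 = (k7 + k8) * x6 := by
  constructor
  · rintro ⟨-, e2, e3, e4, e5, -⟩
    exact ⟨by linear_combination e4, by linear_combination e2 - e4, by linear_combination -e3,
      by linear_combination -e5⟩
  · rintro ⟨e4, e2, e3, e5⟩
    exact ⟨by linear_combination -e2 + e3 - e5, by linear_combination e2 + e4, by linear_combination -e3,
      by linear_combination e4, by linear_combination -e5, by linear_combination e5 - e4⟩

/-- The full two-parameter family of positive steady states of the
PFK-2/FBPase-2 mass-action system. -/
theorem stmt_11 (k1 k2 k3 k4 k5 k6 k7 k8 k9 : ℝ)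
    (h1 : 0 < k1) (h2 : 0 < k2) (h3 : 0 < k3) (h4 : 0 < k4) (h5 : 0 < k5)
    (h6 : 0 < k6) (h7 : 0 < k7) (h8 : 0 < k8) (h9 : 0 < k9) :
    ∀ τ1 τ2 : ℝ, 0 < τ1 → 0 < τ2 →
      (0 < (k2 * (k5 + k9) + k4 * k9 * τ2) * τ1 / (k1 * (k5 + k9)) ∧ 0 < τ1 ∧
        0 < (k2 * (k5 + k9) + k4 * k8 * τ2) * τ1 / (k3 * (k5 + k9)) ∧ 0 < τ2 ∧
        0 < k1 * k4 * (k7 + k8) * τ2 / (k6 * (k2 * (k5 + k9) + k4 * k9 * τ2)) ∧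
        0 < k4 * τ1 * τ2 / (k5 + k9)) ∧
      pfkSteady k1 k2 k3 k4 k5 k6 k7 k8 k9
        ((k2 * (k5 + k9) + k4 * k9 * τ2) * τ1 / (k1 * (k5 + k9)))
        τ1
        ((k2 * (k5 + k9) + k4 * k8 * τ2) * τ1 / (k3 * (k5 + k9)))
        τ2
        (k1 * k4 * (k7 + k8) * τ2 / (k6 * (k2 * (k5 + k9) + k4 * k9 * τ2)))
        (k4 * τ1 * τ2 / (k5 + k9)) := by
  intro τ1 τ2 hτ1 hτ2
  have hA : 0 < k2 * (k5 + k9) + k4 * k9 * τ2 := by positivity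
  refine ⟨⟨by positivity, hτ1, by positivity, hτ2, by positivity, by positivity⟩, ?_⟩
  rw [pfkSteady_iff]
  refine ⟨?_, ?_, ?_, ?_⟩ <;> field_simp
end
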